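/- The twisting functor T (restriction from g ⊗ A to (g ⊗ A)^Γ) maps the isomorphism class ev_ψ of the irreducible evaluation representation of g ⊗ A associated to ψ ∈ E with Supp ψ contained in some element of X_* to the isomorphism class ev^Γ_{ψ^Γ} of the irreducible evaluation representation of (g ⊗ A)^Γ, where ψ^Γ ∈ E^Γ is defined by ψ^Γ(x) = Σ_{γ ∈ Γ} γ · ψ(γ^{−1} · x) for x ∈ X_rat. -/

import Mathlib

set_option linter.unusedSectionVars false

open scoped TensorProduct

noncomputable section

/-- The action of a group element on the maximal spectrum of `A`
(so that `m_{γ·x} = comap (γ⁻¹ • ·) m_x`). -/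
def gammaDot (A Γ : Type*) [CommRing A] [Group Γ] [MulSemiringAction Γ A]
    (γ : Γ) (x : MaximalSpectrum A) : MaximalSpectrum A :=
  ⟨Ideal.comap (MulSemiringAction.toRingHom Γ A γ⁻¹) x.asIdeal, by
    have := x.isMaximal
    exact Ideal.comap_isMaximal_of_surjective _ (MulAction.surjective γ⁻¹)⟩

/-- A finite set of points of `X` containing no two (distinct) points in the same
`Γ`-orbit, i.e. an element of `X_*`. -/
def NoTwoInOrbit (A Γ : Type*) [CommRing A] [Group Γ] [MulSemiringAction Γ A]
    (s : Finset (MaximalSpectrum A)) : Prop :=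
  ∀ x ∈ s, ∀ y ∈ s, ∀ γ : Γ, gammaDot A Γ γ x = y → x = y

/-- The ideal `I_η = ∏_{x ∈ Supp η} m_x ^ η x` of `A`. -/
def idealOf {A : Type*} [CommRing A] (η : MaximalSpectrum A →₀ ℕ) : Ideal A :=
  η.support.prod fun x => x.asIdeal ^ η x

universe u1 u2 u3 u4

variable (k : Type u1) (A : Type u2) (g : Type u3) (Γ : Type u4)
variable [Field k] [IsAlgClosed k] [CharZero k]
variable [CommRing A] [Algebra k A] [Algebra.FiniteType k A]
variable [LieRing g] [LieAlgebra k g] [Module.Finite k g] [LieAlgebra.IsSemisimple k g]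
variable [CommGroup Γ] [Fintype Γ]
variable [MulSemiringAction Γ A] [SMulCommClass Γ k A]
variable [DistribMulAction Γ g] [SMulCommClass Γ k g]

/-- The `k`-submodule `g ⊗ I` of `A ⊗[k] g` determined by an ideal `I ⊆ A`. -/
def gT (I : Ideal A) : Submodule k (A ⊗[k] g) :=
  Submodule.span k {z | ∃ f ∈ I, ∃ v : g, z = f ⊗ₜ[k] v}

/-- The diagonal action of `γ ∈ Γ` on `A ⊗[k] g` as a `k`-linear map. -/
def diagMap (γ : Γ) : (A ⊗[k] g) →ₗ[k] A ⊗[k] g :=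
  TensorProduct.map (DistribMulAction.toLinearMap k A γ) (DistribMulAction.toLinearMap k g γ)

/-- The set of `Γ`-fixed points of `A ⊗[k] g`, i.e. the equivariant map algebra
`(g ⊗ A)^Γ`, as a `k`-submodule. -/
def fixedSub : Submodule k (A ⊗[k] g) :=
  ⨅ γ : Γ, LinearMap.ker (diagMap k A g Γ γ - LinearMap.id)

lemma mem_fixedSub {z : A ⊗[k] g} :
    z ∈ fixedSub k A g Γ ↔ ∀ γ : Γ, diagMap k A g Γ γ z = z := by
  simp [fixedSub, sub_eq_zero, LinearMap.sub_apply]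

/-- `A ⊗[k] g` is a Lie algebra over `k` (by restriction of scalars from `A`). -/
instance : LieAlgebra k (A ⊗[k] g) where
  lie_smul t x y := by
    rw [← algebraMap_smul A t y, lie_smul, algebraMap_smul]

lemma diagMap_lie (hbr : ∀ (γ : Γ) (x y : g), γ • ⁅x, y⁆ = ⁅γ • x, γ • y⁆) (γ : Γ)
    (z w : A ⊗[k] g) :
    diagMap k A g Γ γ ⁅z, w⁆ = ⁅diagMap k A g Γ γ z, diagMap k A g Γ γ w⁆ := by
  induction z using TensorProduct.induction_on with
  | zero => simp
  | tmul a v =>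
    induction w using TensorProduct.induction_on with
    | zero => simp
    | tmul b u =>
      rw [LieAlgebra.ExtendScalars.bracket_tmul]
      simp only [diagMap, DistribMulAction.toLinearMap, TensorProduct.map_tmul,
        DistribSMul.toLinearMap_apply]
      rw [LieAlgebra.ExtendScalars.bracket_tmul, smul_mul', hbr]
    | add w1 w2 h1 h2 => rw [lie_add, map_add, h1, h2, map_add, lie_add]
  | add z1 z2 h1 h2 => rw [add_lie, map_add, h1, h2, map_add, add_lie]

/-- The equivariant map algebra `(g ⊗ A)^Γ` as a Lie subalgebra of `A ⊗[k] g`. -/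
def fixedLie (hbr : ∀ (γ : Γ) (x y : g), γ • ⁅x, y⁆ = ⁅γ • x, γ • y⁆) :
    LieSubalgebra k (A ⊗[k] g) :=
  { fixedSub k A g Γ with
    lie_mem' := by
      intro x y hx hy
      have hx' : x ∈ fixedSub k A g Γ := hx
      have hy' : y ∈ fixedSub k A g Γ := hy
      show ⁅x, y⁆ ∈ fixedSub k A g Γ
      rw [mem_fixedSub] at hx' hy' ⊢
      intro γ
      rw [diagMap_lie k A g Γ hbr, hx' γ, hy' γ] }

/-- `g ⊗ I` as a Lie ideal of `A ⊗[k] g`. -/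
def gTLie (I : Ideal A) : LieIdeal k (A ⊗[k] g) :=
  { gT k A g I with
    lie_mem := by
      intro x m hm
      have hm' : m ∈ gT k A g I := hm
      show ⁅x, m⁆ ∈ gT k A g I
      clear hm
      induction hm' using Submodule.span_induction with
      | mem z hz =>
        obtain ⟨f, hf, v, rfl⟩ := hz
        induction x using TensorProduct.induction_on with
        | zero => rw [zero_lie]; exact (gT k A g I).zero_mem
        | tmul a w =>
          rw [LieAlgebra.ExtendScalars.bracket_tmul]
          exact Submodule.subset_span ⟨a * f, I.mul_mem_left a hf, ⁅w, v⁆, rfl⟩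
        | add x1 x2 h1 h2 => rw [add_lie]; exact (gT k A g I).add_mem h1 h2
      | zero => rw [lie_zero]; exact (gT k A g I).zero_mem
      | add z w _ _ h1 h2 => rw [lie_add]; exact (gT k A g I).add_mem h1 h2
      | smul c z _ h => rw [lie_smul]; exact (gT k A g I).smul_mem c h }

variable {k A g Γ} in
/-- `(g ⊗ I)^Γ` as a Lie ideal of the equivariant map algebra `(g ⊗ A)^Γ`. -/
def fixedIdealOf (hbr : ∀ (γ : Γ) (x y : g), γ • ⁅x, y⁆ = ⁅γ • x, γ • y⁆) (I : Ideal A) :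
    LieIdeal k ↥(fixedLie k A g Γ hbr) where
  carrier := {y | (y : A ⊗[k] g) ∈ gT k A g I}
  add_mem' := fun ha hb => (gT k A g I).add_mem ha hb
  zero_mem' := (gT k A g I).zero_mem
  smul_mem' := fun c y hy => by
    simpa using (gT k A g I).smul_mem c hy
  lie_mem := fun {x m} hm => (gTLie k A g I).lie_mem hm
/-- Data of a fixed triangular decomposition `g = n⁻ ⊕ h ⊕ n⁺` of `g` together with
Chevalley generators `f_i` (`i ∈ ι`), the identification of the monoid `P⁺` of dominant
integral weights with `ι →₀ ℕ` (recording the values `λ(h_i)`), the corresponding linear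
functionals on the Cartan subalgebra `h`, and the height function `ht` on weights (heights
are taken with respect to the simple roots; they are rational on the weight lattice). -/
structure TriData (k g ι : Type*) [Field k] [LieRing g] [LieAlgebra k g] where
  /-- the Cartan subalgebra `h` -/
  hh : LieSubalgebra k g
  /-- the positive part `n⁺` -/
  np : LieSubalgebra k g
  /-- the negative part `n⁻` -/
  nm : LieSubalgebra k g
  /-- the negative Chevalley generators `f_i` -/
  fgen : ι → g
  /-- a dominant weight `λ = (λ(h_i))_i : ι →₀ ℕ` as a linear functional on `h` -/
  wt : (ι →₀ ℕ) →+ (↥hh →ₗ[k] k)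
  /-- the height of a dominant weight -/
  ht : (ι →₀ ℕ) →+ ℚ
  cartan : hh.IsCartanSubalgebra
  fgen_mem : ∀ i, fgen i ∈ nm
  decomp : nm.toSubmodule ⊔ hh.toSubmodule ⊔ np.toSubmodule = ⊤

variable {ι : Type*}

section Points

variable (k A Γ : Type*) [Field k] [CommRing A] [Algebra k A]
  [CommGroup Γ] [MulSemiringAction Γ A] [SMulCommClass Γ k A]

/-- The action of `Γ` on the rational points `X_rat`, realized as `k`-algebra
homomorphisms `A → k` (for a finitely generated algebra over an algebraically closed
field these are exactly the maximal ideals): `(γ · x)(f) = x(γ⁻¹ • f)`. -/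
def cdot (γ : Γ) (x : A →ₐ[k] k) : A →ₐ[k] k :=
  x.comp (MulSemiringAction.toAlgHom k A γ⁻¹)

/-- `x̄` is a set of representatives for the `Γ`-orbits in the finite set `S` of rational
points: it contains exactly one point from each `Γ`-orbit in `S`. -/
def OrbitReps (xbar S : Finset (A →ₐ[k] k)) : Prop :=
  (↑xbar : Set (A →ₐ[k] k)) ⊆ ↑S ∧
  (∀ s ∈ S, ∃ γ : Γ, ∃ y ∈ xbar, cdot k A Γ γ y = s) ∧
  (∀ y ∈ xbar, ∀ y' ∈ xbar, ∀ γ : Γ, cdot k A Γ γ y = y' → y = y')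

/-- No two (distinct) points of `s` lie in the same `Γ`-orbit, i.e. `s ∈ X_*`. -/
def NoTwoInOrbitPt (s : Finset (A →ₐ[k] k)) : Prop :=
  ∀ x ∈ s, ∀ y ∈ s, ∀ γ : Γ, cdot k A Γ γ x = y → x = y

/-- The ideal `I_η = ∏_{x ∈ Supp η} m_x ^ η x` of `A`, where `m_x` is the maximal ideal
corresponding to the rational point `x`. -/
def idealOfPt (η : (A →ₐ[k] k) →₀ ℕ) : Ideal A :=
  η.support.prod fun x => (RingHom.ker x) ^ η x

end Points

section Wt

variable {k A : Type*} [Field k] [CommRing A] [Algebra k A]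

/-- `ψ_{x̄}`: the restriction of `ψ ∈ E` to a set of points `x̄` (extended by zero). -/
noncomputable def psiRes (ψ : (A →ₐ[k] k) →₀ (ι →₀ ℕ)) (xbar : Finset (A →ₐ[k] k)) :
    (A →ₐ[k] k) →₀ (ι →₀ ℕ) :=
  haveI := Classical.decPred (· ∈ xbar)
  ψ.filter (· ∈ xbar)

/-- `wt ψ = ∑_x ψ(x)`, the total weight of `ψ ∈ E`. -/
def weightOf (ψ : (A →ₐ[k] k) →₀ (ι →₀ ℕ)) : ι →₀ ℕ := ψ.sum fun _ μ => μ

end Wt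

/-- The action of `γ ∈ Γ` on dominant weights, induced by the action of `Γ` on the set `ι`
of nodes of the Dynkin diagram (diagram automorphisms): `(γ • λ)(h_i) = λ(h_{γ⁻¹ • i})`. -/
def pAct {Γ ι : Type*} [Group Γ] [MulAction Γ ι] (γ : Γ) (lam : ι →₀ ℕ) : ι →₀ ℕ :=
  Finsupp.equivMapDomain (MulAction.toPerm γ) lam

universe uR uL

/-- A bundled Lie module over the Lie `R`-algebra `L`. -/
structure LMod (R : Type uR) (L : Type uL) [CommRing R] [LieRing L] [LieAlgebra R L] where
  carrier : Type (max uR uL)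
  [isAddCommGroup : AddCommGroup carrier]
  [isModule : Module R carrier]
  [isLieRingModule : LieRingModule L carrier]
  [isLieModule : LieModule R L carrier]

attribute [instance] LMod.isAddCommGroup LMod.isModule LMod.isLieRingModule LMod.isLieModule

section CompSeries

variable {R L M : Type*} [CommRing R] [LieRing L] [LieAlgebra R L]
variable [AddCommGroup M] [Module R M] [LieRingModule L M] [LieModule R L M]

/-- `F` is a chain of Lie submodules from `⊥` to `⊤` (the successive quotients are not yet
required to be irreducible; this is imposed via `FactorIso` against irreducible modules). -/
def IsCompChain (n : ℕ) (F : Fin (n + 1) → LieSubmodule R L M) : Prop :=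
  Monotone F ∧ F 0 = ⊥ ∧ F (Fin.last n) = ⊤

/-- The `i`-th factor `F (i+1) / F i` of the chain `F` is isomorphic to `S`:  there is a
surjective morphism of Lie modules `F (i+1) → S` whose kernel is exactly `F i`. -/
def FactorIso (n : ℕ) (F : Fin (n + 1) → LieSubmodule R L M) (i : Fin n) (S : Type*)
    [AddCommGroup S] [Module R S] [LieRingModule L S] [LieModule R L S] : Prop :=
  ∃ f : ↥(F i.succ) →ₗ⁅R,L⁆ S, Function.Surjective f ∧
    ∀ z : ↥(F i.succ), f z = 0 ↔ (z : M) ∈ F i.castSucc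

end CompSeries

variable {ι : Type*} [Fintype ι] [MulAction Γ ι]

/-- The relations satisfied by the generator `w_ψ` of the local Weyl module `W(ψ)`:
`(n⁺ ⊗ A) ⬝ w = 0`, `(f_i ⊗ 1)^{λ(h_i)+1} ⬝ w = 0` where `λ = wt ψ`, and
`(b ⊗ f) ⬝ w = (∑_{x ∈ Supp ψ} ψ(x)(f(x) b)) w` for `b ∈ h`, `f ∈ A`. -/
def IsWeylVec (T : TriData k g ι) (ψ : (A →ₐ[k] k) →₀ (ι →₀ ℕ)) {W : Type*}
    [AddCommGroup W] [Module k W] [LieRingModule (A ⊗[k] g) W] [LieModule k (A ⊗[k] g) W]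
    (w : W) : Prop :=
  (∀ f : A, ∀ n ∈ T.np, ⁅(f ⊗ₜ[k] n : A ⊗[k] g), w⁆ = 0) ∧
  (∀ i : ι,
    (LieModule.toEnd k (A ⊗[k] g) W ((1 : A) ⊗ₜ[k] T.fgen i) ^ (weightOf ψ i + 1)) w = 0) ∧
  (∀ f : A, ∀ b : T.hh,
    ⁅(f ⊗ₜ[k] (b : g) : A ⊗[k] g), w⁆ = (∑ x ∈ ψ.support, x f * T.wt (ψ x) b) • w)

/-- `W` is (a copy of) the local Weyl module `W(ψ)` of `g ⊗ A`:  it is generated by a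
nonzero vector `w_ψ` satisfying the Weyl relations, and is universal with this property. -/
def IsWeylModule (T : TriData k g ι) (ψ : (A →ₐ[k] k) →₀ (ι →₀ ℕ)) (W : Type*)
    [AddCommGroup W] [Module k W] [LieRingModule (A ⊗[k] g) W] [LieModule k (A ⊗[k] g) W] :
    Prop :=
  ∃ w : W, w ≠ 0 ∧ IsWeylVec k A g T ψ w ∧
    LieSubmodule.lieSpan k (A ⊗[k] g) ({w} : Set W) = ⊤ ∧
    ∀ (V : Type (max u1 u2 u3)) [AddCommGroup V] [Module k V] [LieRingModule (A ⊗[k] g) V]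
      [LieModule k (A ⊗[k] g) V] (v : V), IsWeylVec k A g T ψ v →
        ∃! φ : W →ₗ⁅k,A ⊗[k] g⁆ V, φ w = v

/-- `V` is (a copy of) the irreducible evaluation module `V(ψ)` of `g ⊗ A` associated to
`ψ ∈ E`:  it is irreducible, finite-dimensional and possesses a nonzero vector satisfying
the Weyl relations for `ψ`. -/
def IsSimpleEvalMod (T : TriData k g ι) (ψ : (A →ₐ[k] k) →₀ (ι →₀ ℕ)) (V : Type*)
    [AddCommGroup V] [Module k V] [LieRingModule (A ⊗[k] g) V] [LieModule k (A ⊗[k] g) V] :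
    Prop :=
  LieModule.IsIrreducible k (A ⊗[k] g) V ∧ FiniteDimensional k V ∧
    ∃ v : V, v ≠ 0 ∧ IsWeylVec k A g T ψ v

/-- `ψ : X_rat → P⁺` is `Γ`-equivariant, i.e. `ψ ∈ E^Γ`. -/
def EquivariantE (ψ : (A →ₐ[k] k) →₀ (ι →₀ ℕ)) : Prop :=
  ∀ (γ : Γ) (x : A →ₐ[k] k), ψ (cdot k A Γ γ x) = pAct γ (ψ x)

/-- The height of `ψ ∈ E^Γ`: the common value `∑_{x ∈ x̄} ht ψ(x)` for a set `x̄` of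
`Γ`-orbit representatives of `Supp ψ` (computed here as the sum over the whole support
divided by `|Γ|`, using that `Γ` acts freely). -/
def htE (T : TriData k g ι) (ψ : (A →ₐ[k] k) →₀ (ι →₀ ℕ)) : ℚ :=
  (∑ x ∈ ψ.support, T.ht (ψ x)) / (Fintype.card Γ : ℚ)

variable {k A g Γ}

/-- `V` is (a copy of) the irreducible evaluation module `V_Γ(ψ)` of the equivariant map
algebra `(g ⊗ A)^Γ` associated to `ψ ∈ E^Γ`: the restriction to `(g ⊗ A)^Γ` of the
irreducible evaluation module `V(ψ_{x̄})` of `g ⊗ A`, where `x̄` is a set of `Γ`-orbit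
representatives of `Supp ψ`. -/
def IsSimpleEvalModΓ (hbr : ∀ (γ : Γ) (x y : g), γ • ⁅x, y⁆ = ⁅γ • x, γ • y⁆)
    (T : TriData k g ι) (ψ : (A →ₐ[k] k) →₀ (ι →₀ ℕ)) (V : Type*)
    [AddCommGroup V] [Module k V] [LieRingModule ↥(fixedLie k A g Γ hbr) V]
    [LieModule k ↥(fixedLie k A g Γ hbr) V] : Prop :=
  ∃ xbar : Finset (A →ₐ[k] k), OrbitReps k A Γ xbar ψ.support ∧
    ∃ U : LMod k (A ⊗[k] g), IsSimpleEvalMod k A g T (psiRes ψ xbar) U.carrier ∧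
      Nonempty (V ≃ₗ⁅k,↥(fixedLie k A g Γ hbr)⁆ U.carrier)

/-- `V` is (a copy of) the twisted local Weyl module `W_Γ(ψ)` of `(g ⊗ A)^Γ` for
`ψ ∈ E^Γ`: the restriction to `(g ⊗ A)^Γ` of the untwisted local Weyl module `W(ψ_{x̄})`,
where `x̄` is a set of `Γ`-orbit representatives of `Supp ψ`. -/
def IsTwistedWeylModule (hbr : ∀ (γ : Γ) (x y : g), γ • ⁅x, y⁆ = ⁅γ • x, γ • y⁆)
    (T : TriData k g ι) (ψ : (A →ₐ[k] k) →₀ (ι →₀ ℕ)) (V : Type*)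
    [AddCommGroup V] [Module k V] [LieRingModule ↥(fixedLie k A g Γ hbr) V]
    [LieModule k ↥(fixedLie k A g Γ hbr) V] : Prop :=
  ∃ xbar : Finset (A →ₐ[k] k), OrbitReps k A Γ xbar ψ.support ∧
    ∃ U : LMod k (A ⊗[k] g), IsWeylModule k A g T (psiRes ψ xbar) U.carrier ∧
      Nonempty (V ≃ₗ⁅k,↥(fixedLie k A g Γ hbr)⁆ U.carrier)

/-- The finite-dimensional `(g ⊗ A)`-module `U` lies in the subcategory `F_{x̄}`:
equivalently (Proposition 9 of [CFK]), it is annihilated by `g ⊗ I_η` for some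
`η` supported in `x̄`. -/
def InFx (xbar : Finset (A →ₐ[k] k)) (U : Type*) [AddCommGroup U] [Module k U]
    [LieRingModule (A ⊗[k] g) U] [LieModule k (A ⊗[k] g) U] : Prop :=
  FiniteDimensional k U ∧ ∃ η : (A →ₐ[k] k) →₀ ℕ, (↑η.support : Set (A →ₐ[k] k)) ⊆ ↑xbar ∧
    ∀ z ∈ gT k A g (idealOfPt k A η), ∀ v : U, ⁅z, v⁆ = 0

/-- The finite-dimensional `(g ⊗ A)^Γ`-module `V` lies in the subcategory `F^Γ_{x̄}`:
equivalently, it is annihilated by `(g ⊗ I_η)^Γ` for some `η` supported in `x̄`. -/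
def InFxΓ (hbr : ∀ (γ : Γ) (x y : g), γ • ⁅x, y⁆ = ⁅γ • x, γ • y⁆)
    (xbar : Finset (A →ₐ[k] k)) (V : Type*) [AddCommGroup V] [Module k V]
    [LieRingModule ↥(fixedLie k A g Γ hbr) V] [LieModule k ↥(fixedLie k A g Γ hbr) V] :
    Prop :=
  FiniteDimensional k V ∧ ∃ η : (A →ₐ[k] k) →₀ ℕ, (↑η.support : Set (A →ₐ[k] k)) ⊆ ↑xbar ∧
    ∀ y : ↥(fixedLie k A g Γ hbr), (y : A ⊗[k] g) ∈ gT k A g (idealOfPt k A η) →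
      ∀ v : V, ⁅y, v⁆ = 0

/-- The multiplicity of the irreducible `V_Γ(φ)` as a composition factor of the
finite-dimensional `(g ⊗ A)^Γ`-module `M` is `m`. -/
def MultΓ (hbr : ∀ (γ : Γ) (x y : g), γ • ⁅x, y⁆ = ⁅γ • x, γ • y⁆)
    (T : TriData k g ι) (M : Type*) [AddCommGroup M] [Module k M]
    [LieRingModule ↥(fixedLie k A g Γ hbr) M] [LieModule k ↥(fixedLie k A g Γ hbr) M]
    (φ : (A →ₐ[k] k) →₀ (ι →₀ ℕ)) (m : ℕ) : Prop :=
  ∃ (n : ℕ) (F : Fin (n + 1) → LieSubmodule k ↥(fixedLie k A g Γ hbr) M)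
    (φs : Fin n → ((A →ₐ[k] k) →₀ (ι →₀ ℕ))),
    IsCompChain n F ∧
    (∀ i : Fin n, EquivariantE k A Γ (φs i) ∧
      ∃ S : LMod k ↥(fixedLie k A g Γ hbr),
        IsSimpleEvalModΓ hbr T (φs i) S.carrier ∧ FactorIso n F i S.carrier) ∧
    Nat.card {i : Fin n // φs i = φ} = m

/-- The multiplicity of the irreducible `V(φ)` as a composition factor of the
finite-dimensional `(g ⊗ A)`-module `M` is `m`. -/
def MultMod (T : TriData k g ι) (M : Type*) [AddCommGroup M] [Module k M]
    [LieRingModule (A ⊗[k] g) M] [LieModule k (A ⊗[k] g) M]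
    (φ : (A →ₐ[k] k) →₀ (ι →₀ ℕ)) (m : ℕ) : Prop :=
  ∃ (n : ℕ) (F : Fin (n + 1) → LieSubmodule k (A ⊗[k] g) M)
    (φs : Fin n → ((A →ₐ[k] k) →₀ (ι →₀ ℕ))),
    IsCompChain n F ∧
    (∀ i : Fin n, ∃ S : LMod k (A ⊗[k] g),
        IsSimpleEvalMod k A g T (φs i) S.carrier ∧ FactorIso n F i S.carrier) ∧
    Nat.card {i : Fin n // φs i = φ} = m

/-- `M` is a maximal weight `(g ⊗ A)^Γ`-module of maximal weight `ψ`: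
`mult_ψ M = 1`, and every other `φ ∈ E^Γ` occurring in `M` satisfies `ht φ < ht ψ`. -/
def IsMaxWeightΓ (hbr : ∀ (γ : Γ) (x y : g), γ • ⁅x, y⁆ = ⁅γ • x, γ • y⁆)
    (T : TriData k g ι) (M : Type*) [AddCommGroup M] [Module k M]
    [LieRingModule ↥(fixedLie k A g Γ hbr) M] [LieModule k ↥(fixedLie k A g Γ hbr) M]
    (ψ : (A →ₐ[k] k) →₀ (ι →₀ ℕ)) : Prop :=
  ∃ (n : ℕ) (F : Fin (n + 1) → LieSubmodule k ↥(fixedLie k A g Γ hbr) M)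
    (φs : Fin n → ((A →ₐ[k] k) →₀ (ι →₀ ℕ))),
    IsCompChain n F ∧
    (∀ i : Fin n, EquivariantE k A Γ (φs i) ∧
      ∃ S : LMod k ↥(fixedLie k A g Γ hbr),
        IsSimpleEvalModΓ hbr T (φs i) S.carrier ∧ FactorIso n F i S.carrier) ∧
    Nat.card {i : Fin n // φs i = ψ} = 1 ∧
    (∀ i : Fin n, φs i ≠ ψ → htE k A g Γ T (φs i) < htE k A g Γ T ψ)

/-- The context fact (Bourbaki VIII §7.2) that twisting an irreducible highest weight
`g`-module by the automorphism `γ` produces the irreducible module of highest weight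
`γ_{Out} · λ`:  this is how `Γ` acts on `P⁺`. -/
def OutCompat (T : TriData k g ι) : Prop :=
  ∀ (γ : Γ) (lam : ι →₀ ℕ) (M N : LMod k g),
    (LieModule.IsIrreducible k g M.carrier ∧ FiniteDimensional k M.carrier ∧
      ∃ v : M.carrier, v ≠ 0 ∧ (∀ n ∈ T.np, ⁅n, v⁆ = 0) ∧
        (∀ b : T.hh, ⁅(b : g), v⁆ = T.wt lam b • v)) →
    (LieModule.IsIrreducible k g N.carrier ∧ FiniteDimensional k N.carrier ∧
      ∃ v : N.carrier, v ≠ 0 ∧ (∀ n ∈ T.np, ⁅n, v⁆ = 0) ∧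
        (∀ b : T.hh, ⁅(b : g), v⁆ = T.wt (pAct γ lam) b • v)) →
    ∃ e : M.carrier ≃ₗ[k] N.carrier, ∀ (x : g) (m : M.carrier), e ⁅x, m⁆ = ⁅γ • x, e m⁆

/-! When `Supp ψ` meets every `Γ`-orbit at most once and `Γ` acts freely, the only summand of
`ψ^Γ(x) = ∑ γ · ψ(γ⁻¹ · x)` that can be nonzero at a point `x ∈ Supp ψ` is the one for
`γ = 1`. Hence `Supp ψ` is a set of orbit representatives of `Supp ψ^Γ` on which `ψ^Γ`
restricts to `ψ`, and `V(ψ)` itself is the module that the definition of `V_Γ(ψ^Γ)` asks for. -/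

section Points

variable {K R G : Type*} [Field K] [CommRing R] [Algebra K R]
  [CommGroup G] [MulSemiringAction G R] [SMulCommClass G K R]

@[simp]
lemma cdot_one (x : R →ₐ[K] K) : cdot K R G 1 x = x := by
  ext a
  simp [cdot, MulSemiringAction.toAlgHom]

lemma cdot_cdot (γ δ : G) (x : R →ₐ[K] K) :
    cdot K R G γ (cdot K R G δ x) = cdot K R G (γ * δ) x := by
  ext a
  simp only [cdot, AlgHom.comp_apply, MulSemiringAction.toAlgHom_apply]
  rw [mul_inv_rev, mul_smul]

@[simp]
lemma cdot_cdot_inv (γ : G) (x : R →ₐ[K] K) : cdot K R G γ (cdot K R G γ⁻¹ x) = x := by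
  rw [cdot_cdot, mul_inv_cancel, cdot_one]

lemma NoTwoInOrbitPt.cdot_notMem (hfree : ∀ γ : G, γ ≠ 1 → ∀ x : R →ₐ[K] K, cdot K R G γ x ≠ x)
    {s : Finset (R →ₐ[K] K)} (hs : NoTwoInOrbitPt K R G s) {x : R →ₐ[K] K} (hx : x ∈ s)
    {γ : G} (hγ : γ ≠ 1) : cdot K R G γ x ∉ s := fun hγx =>
  hfree γ hγ x (hs x hx _ hγx γ rfl).symm

end Points

section Weights

variable {G κ : Type*} [Group G] [MulAction G κ]

@[simp]
lemma pAct_one (lam : κ →₀ ℕ) : pAct (1 : G) lam = lam := by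
  ext i
  simp [pAct, Finsupp.equivMapDomain_apply, MulAction.toPerm_symm_apply]

@[simp]
lemma pAct_zero (γ : G) : pAct γ (0 : κ →₀ ℕ) = 0 := by
  simp [pAct]

end Weights

section Twist

variable {K R G κ : Type*} [Field K] [CommRing R] [Algebra K R]
  [CommGroup G] [Fintype G] [MulSemiringAction G R] [SMulCommClass G K R] [MulAction G κ]
  {ψ ψΓ : (R →ₐ[K] K) →₀ (κ →₀ ℕ)}

lemma twist_apply_of_mem_support
    (hfree : ∀ γ : G, γ ≠ 1 → ∀ x : R →ₐ[K] K, cdot K R G γ x ≠ x)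
    (hψ : NoTwoInOrbitPt K R G ψ.support)
    (hψΓ : ∀ x, ψΓ x = ∑ γ : G, pAct γ (ψ (cdot K R G γ⁻¹ x)))
    {x : R →ₐ[K] K} (hx : x ∈ ψ.support) : ψΓ x = ψ x := by
  rw [hψΓ, Finset.sum_eq_single_of_mem 1 (Finset.mem_univ _)]
  · simp
  · intro γ _ hγ
    have hγx : cdot K R G γ⁻¹ x ∉ ψ.support := hψ.cdot_notMem hfree hx (inv_ne_one.mpr hγ)
    rw [Finsupp.notMem_support_iff.mp hγx, pAct_zero]

lemma psiRes_twist_support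
    (hfree : ∀ γ : G, γ ≠ 1 → ∀ x : R →ₐ[K] K, cdot K R G γ x ≠ x)
    (hψ : NoTwoInOrbitPt K R G ψ.support)
    (hψΓ : ∀ x, ψΓ x = ∑ γ : G, pAct γ (ψ (cdot K R G γ⁻¹ x))) :
    psiRes ψΓ ψ.support = ψ := by
  refine Finsupp.ext fun x => ?_
  rw [psiRes, Finsupp.filter_apply]
  split_ifs with hx
  · exact twist_apply_of_mem_support hfree hψ hψΓ hx
  · exact (Finsupp.notMem_support_iff.mp hx).symm

lemma exists_cdot_mem_support_of_twist
    (hψΓ : ∀ x, ψΓ x = ∑ γ : G, pAct γ (ψ (cdot K R G γ⁻¹ x)))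
    {s : R →ₐ[K] K} (hs : s ∈ ψΓ.support) : ∃ γ : G, ∃ y ∈ ψ.support, cdot K R G γ y = s := by
  rw [Finsupp.mem_support_iff, hψΓ] at hs
  obtain ⟨γ, -, hγ⟩ := Finset.exists_ne_zero_of_sum_ne_zero hs
  have hy : ψ (cdot K R G γ⁻¹ s) ≠ 0 := fun h0 => hγ (by rw [h0, pAct_zero])
  exact ⟨γ, _, Finsupp.mem_support_iff.mpr hy, cdot_cdot_inv γ s⟩

lemma orbitReps_support_twist
    (hfree : ∀ γ : G, γ ≠ 1 → ∀ x : R →ₐ[K] K, cdot K R G γ x ≠ x)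
    (hψ : NoTwoInOrbitPt K R G ψ.support)
    (hψΓ : ∀ x, ψΓ x = ∑ γ : G, pAct γ (ψ (cdot K R G γ⁻¹ x))) :
    OrbitReps K R G ψ.support ψΓ.support := by
  refine ⟨fun x hx => ?_, fun s hs => exists_cdot_mem_support_of_twist hψΓ hs, hψ⟩
  rw [Finset.mem_coe, Finsupp.mem_support_iff, twist_apply_of_mem_support hfree hψ hψΓ hx]
  exact Finsupp.mem_support_iff.mp hx

end Twist

theorem statement7_general
    (hbr : ∀ (γ : Γ) (x y : g), γ • ⁅x, y⁆ = ⁅γ • x, γ • y⁆)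
    (hfree : ∀ γ : Γ, γ ≠ 1 → ∀ x : A →ₐ[k] k, cdot k A Γ γ x ≠ x)
    (T : TriData k g ι)
    (ψ : (A →ₐ[k] k) →₀ (ι →₀ ℕ)) (hψsupp : NoTwoInOrbitPt k A Γ ψ.support)
    (ψΓ : (A →ₐ[k] k) →₀ (ι →₀ ℕ))
    (hψΓ : ∀ x : A →ₐ[k] k, ψΓ x = ∑ γ : Γ, pAct γ (ψ (cdot k A Γ γ⁻¹ x)))
    (V : Type (max u1 u2 u3)) [AddCommGroup V] [Module k V]
    [LieRingModule (A ⊗[k] g) V] [LieModule k (A ⊗[k] g) V]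
    (hV : IsSimpleEvalMod k A g T ψ V) :
    IsSimpleEvalModΓ hbr T ψΓ V := by
  refine ⟨ψ.support, orbitReps_support_twist hfree hψsupp hψΓ, ⟨V⟩, ?_, ⟨LieModuleEquiv.refl⟩⟩
  rwa [psiRes_twist_support hfree hψsupp hψΓ]

/-- Theorem 3.3(1) of the paper.  The twisting functor `T` (restriction
from `g ⊗ A` to `(g ⊗ A)^Γ`) maps the isomorphism class `ev_ψ` (for `ψ ∈ E` with support
in an element of `X_*`) to the class `ev^Γ_{ψ^Γ}`, where
`ψ^Γ(x) = ∑_{γ ∈ Γ} γ · ψ(γ⁻¹ · x)`. -/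
theorem statement7
    (hbr : ∀ (γ : Γ) (x y : g), γ • ⁅x, y⁆ = ⁅γ • x, γ • y⁆)
    (hfree : ∀ γ : Γ, γ ≠ 1 → ∀ x : A →ₐ[k] k, cdot k A Γ γ x ≠ x)
    (T : TriData k g ι) (hout : OutCompat (Γ := Γ) T)
    (hht : ∀ (γ : Γ) (lam : ι →₀ ℕ), T.ht (pAct γ lam) = T.ht lam)
    (ψ : (A →ₐ[k] k) →₀ (ι →₀ ℕ)) (hψsupp : NoTwoInOrbitPt k A Γ ψ.support)
    (ψΓ : (A →ₐ[k] k) →₀ (ι →₀ ℕ))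
    (hψΓ : ∀ x : A →ₐ[k] k, ψΓ x = ∑ γ : Γ, pAct γ (ψ (cdot k A Γ γ⁻¹ x)))
    (V : Type (max u1 u2 u3)) [AddCommGroup V] [Module k V]
    [LieRingModule (A ⊗[k] g) V] [LieModule k (A ⊗[k] g) V]
    (hV : IsSimpleEvalMod k A g T ψ V) :
    IsSimpleEvalModΓ hbr T ψΓ V :=
  statement7_general hbr hfree T ψ hψsupp ψΓ hψΓ V hV

end
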